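/- Let M be an n×n complex matrix of type S with weight 0 (all row sums and all column sums of M are zero). Then there exists a constant w ∈ ℂ such that the adjugate of M equals w·E_n, i.e. every entry of adj M equals w. -/

import Mathlib

/-!
`adj M i j` is the determinant of `M` with row `j` replaced by `eᵢ`. Replacing it by `eᵢ - eᵢ'`
instead leaves a matrix whose rows all sum to zero, which kills the all-ones vector and so has
determinant zero; by linearity in row `j`, `adj M i j = adj M i' j`. Applying this to `Mᵀ`
shows the entries are also independent of `j`.
-/

open Matrix Finset

/-- The all-ones `n × n` matrix `E_n = 1ₙ 1ₙᵀ`. -/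
def En (n : ℕ) : Matrix (Fin n) (Fin n) ℂ := Matrix.of fun _ _ => 1

namespace Matrix

variable {ι R : Type*} [Fintype ι] [DecidableEq ι] [CommRing R]

theorem det_eq_zero_of_sum_row_eq_zero [Nonempty ι] {N : Matrix ι ι R}
    (h : ∀ i, ∑ j, N i j = 0) : N.det = 0 := by
  have hker : N *ᵥ 1 = 0 := by
    ext i
    simpa [mulVec, dotProduct] using h i
  exact det_eq_zero_of_mulVec_eq_zero_of_mem_nonZeroDivisors hker
    (i := Classical.arbitrary ι) (one_mem _)

theorem adjugate_apply_eq_of_sum_row_eq_zero {N : Matrix ι ι R}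
    (h : ∀ i, ∑ j, N i j = 0) (i i' j : ι) : N.adjugate i j = N.adjugate i' j := by
  have : Nonempty ι := ⟨i⟩
  have hsplit : (Pi.single i 1 : ι → R) = (Pi.single i 1 - Pi.single i' 1) + Pi.single i' 1 := by
    abel
  have hdiff : (N.updateRow j (Pi.single i 1 - Pi.single i' 1)).det = 0 := by
    refine det_eq_zero_of_sum_row_eq_zero fun k => ?_
    by_cases hk : k = j
    · subst hk
      simp [sum_sub_distrib]
    · simpa [updateRow_ne hk] using h k
  rw [adjugate_apply, adjugate_apply, hsplit, det_updateRow_add, hdiff, zero_add]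

theorem adjugate_apply_eq_of_sum_col_eq_zero {N : Matrix ι ι R}
    (h : ∀ j, ∑ i, N i j = 0) (i j j' : ι) : N.adjugate i j = N.adjugate i j' := by
  simpa [← adjugate_transpose] using
    adjugate_apply_eq_of_sum_row_eq_zero (N := Nᵀ) h j j' i

end Matrix

/-- The adjugate of a type S matrix of weight 0 (all row and column sums zero) is a
scalar multiple of `E_n`, i.e. has all entries equal. -/
theorem adjugate_of_weightless_typeS {n : ℕ}
    (M : Matrix (Fin n) (Fin n) ℂ)
    (hrow : ∀ i, ∑ j, M i j = 0) (hcol : ∀ j, ∑ i, M i j = 0) :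
    ∃ w : ℂ, M.adjugate = w • En n := by
  rcases n.eq_zero_or_pos with rfl | hn
  · exact ⟨0, Subsingleton.elim _ _⟩
  let o : Fin n := ⟨0, hn⟩
  refine ⟨M.adjugate o o, ?_⟩
  ext i j
  have hconst : M.adjugate i j = M.adjugate o o := by
    rw [adjugate_apply_eq_of_sum_row_eq_zero hrow i o j,
      adjugate_apply_eq_of_sum_col_eq_zero hcol o j o]
  simp [hconst, En]
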